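/- arXiv:2407.14251 — 2 statements merged into one kernel-verified Lean document; each statement's English description precedes it below -/
import Mathlib

section
/- Let E be a finite-dimensional real inner product space, let g : E → ℝ be convex and continuous, and let λ > 0. Then the Moreau envelope g̃^λ is λ-smooth: it is differentiable and ‖∇g̃^λ(x) − ∇g̃^λ(y)‖ ≤ λ‖x − y‖ for all x, y ∈ E. -/
/-! The objective `u ↦ g u + λ/2 ‖u - x‖²` is `λ`-strongly convex and, since `g` has an affine
minorant, coercive; so it has a minimiser `prox x` with quadratic growth around it. Adding the growth
inequalities at `prox x` and `prox y` shows that `prox` is firmly nonexpansive, hence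
`x ↦ λ (x - prox x)` is `λ`-Lipschitz. Comparing the envelope at `y` with the objective at `prox z`
gives a one-sided quadratic bound, which together with continuity of this map makes it the
gradient of the envelope. -/

open Set Filter Topology
open scoped RealInnerProductSpace

section NormedSpace
variable {E : Type*} [NormedAddCommGroup E]

lemma tendsto_add_mul_norm_sub_sq_cocompact [ProperSpace E] {g : E → ℝ} {a c lam : ℝ}
    (hc : 0 ≤ c) (hg : ∀ u, a - c * ‖u‖ ≤ g u) (hlam : 0 < lam) (x : E) :
    Tendsto (fun u => g u + lam / 2 * ‖u - x‖ ^ 2) (cocompact E) atTop := by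
  have hdist : Tendsto (fun u => ‖u - x‖) (cocompact E) atTop :=
    tendsto_atTop_mono (fun u => norm_sub_norm_le u x)
      (tendsto_atTop_add_const_right _ _ tendsto_norm_cocompact_atTop)
  have hquad : Tendsto (fun r : ℝ => a - c * ‖x‖ + r * (lam / 2 * r - c)) atTop atTop :=
    tendsto_atTop_add_const_left _ _ <| tendsto_id.atTop_mul_atTop₀ <|
      tendsto_atTop_add_const_right _ _ (tendsto_id.const_mul_atTop (by positivity))
  refine tendsto_atTop_mono (fun u => ?_) (hquad.comp hdist)
  have hu : ‖u‖ ≤ ‖u - x‖ + ‖x‖ := norm_le_norm_sub_add u x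
  simp only [Function.comp_apply]
  nlinarith [hg u, mul_le_mul_of_nonneg_left hu hc]

noncomputable def moreauEnvelope (g : E → ℝ) (lam : ℝ) (x : E) : ℝ :=
  ⨅ u, g u + lam / 2 * ‖u - x‖ ^ 2

lemma moreauEnvelope_eq_of_isMinOn {g : E → ℝ} {lam : ℝ} {x p : E}
    (hp : IsMinOn (fun u => g u + lam / 2 * ‖u - x‖ ^ 2) univ p) :
    moreauEnvelope g lam x = g p + lam / 2 * ‖p - x‖ ^ 2 :=
  ciInf_eq_of_forall_ge_of_forall_gt_exists_lt (fun u => hp (mem_univ u)) fun _ hw => ⟨p, hw⟩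

variable [NormedSpace ℝ E]

lemma ConvexOn.exists_sub_mul_norm_le {g : E → ℝ} (hg : ConvexOn ℝ univ g)
    (hsc : LowerSemicontinuous g) : ∃ a c : ℝ, 0 ≤ c ∧ ∀ u, a - c * ‖u‖ ≤ g u := by
  obtain ⟨l, b, hle, -⟩ := exists_affine_le_of_lt (𝕜 := ℝ) (mem_univ 0) (sub_one_lt (g 0))
    isClosed_univ (hsc.lowerSemicontinuousOn _) hg
  refine ⟨b, ‖l‖, norm_nonneg l, fun u => ?_⟩
  have h1 : l u + b ≤ g u := by simpa using hle ⟨u, mem_univ u⟩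
  have h2 : -(‖l‖ * ‖u‖) ≤ l u := by simpa using neg_le_of_abs_le (l.le_opNorm u)
  linarith

lemma ConvexOn.exists_isMinOn_add_mul_norm_sub_sq [ProperSpace E] {g : E → ℝ}
    (hg : ConvexOn ℝ univ g) (hcont : Continuous g) {lam : ℝ} (hlam : 0 < lam) (x : E) :
    ∃ p, IsMinOn (fun u => g u + lam / 2 * ‖u - x‖ ^ 2) univ p := by
  obtain ⟨a, c, hc, hac⟩ := hg.exists_sub_mul_norm_le hcont.lowerSemicontinuous
  simpa only [isMinOn_univ_iff] using
    (Continuous.exists_forall_le (f := fun u => g u + lam / 2 * ‖u - x‖ ^ 2) (by fun_prop)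
      (tendsto_add_mul_norm_sub_sq_cocompact hc hac hlam x))

lemma StrongConvexOn.add_mul_norm_sub_sq_le_of_isMinOn {s : Set E} {f : E → ℝ} {m : ℝ} {p : E}
    (hf : StrongConvexOn s m f) (hp : IsMinOn f s p) (hps : p ∈ s) {u : E} (hu : u ∈ s) :
    f p + m / 2 * ‖u - p‖ ^ 2 ≤ f u := by
  have hseg : ∀ t ∈ Ioo (0 : ℝ) 1, f p + (1 - t) * (m / 2 * ‖u - p‖ ^ 2) ≤ f u := by
    rintro t ⟨ht0, ht1⟩
    have hconv := hf.2 hps hu (sub_nonneg.2 ht1.le) ht0.le (sub_add_cancel 1 t)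
    have hmin := hp (hf.1 hps hu (sub_nonneg.2 ht1.le) ht0.le (sub_add_cancel 1 t))
    rw [smul_eq_mul, smul_eq_mul, norm_sub_rev] at hconv
    nlinarith [hmin.trans hconv]
  have hlim : Tendsto (fun t : ℝ => f p + (1 - t) * (m / 2 * ‖u - p‖ ^ 2)) (𝓝[>] 0)
      (𝓝 (f p + (1 - 0) * (m / 2 * ‖u - p‖ ^ 2))) :=
    (Continuous.tendsto (by fun_prop) 0).mono_left nhdsWithin_le_nhds
  simpa using le_of_tendsto hlim (mem_of_superset (Ioo_mem_nhdsGT one_pos) hseg)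

end NormedSpace

section InnerProductSpace
variable {E : Type*} [NormedAddCommGroup E] [InnerProductSpace ℝ E]

lemma ConvexOn.strongConvexOn_add_mul_norm_sub_sq {g : E → ℝ} (hg : ConvexOn ℝ univ g)
    (lam : ℝ) (x : E) : StrongConvexOn univ lam (fun u => g u + lam / 2 * ‖u - x‖ ^ 2) := by
  rw [strongConvexOn_iff_convex]
  have hsplit : (fun u => g u + lam / 2 * ‖u - x‖ ^ 2 - lam / 2 * ‖u‖ ^ 2)
      = fun u => g u + lam / 2 * ‖x‖ ^ 2 + ⟪-lam • x, u⟫ := by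
    funext u
    rw [norm_sub_sq_real, real_inner_smul_left, real_inner_comm]
    ring
  rw [hsplit]
  exact (hg.add_const _).add ((innerSL ℝ (-lam • x) : E →ₗ[ℝ] ℝ).convexOn convex_univ)

lemma ConvexOn.norm_sub_sq_le_inner_of_isMinOn {g : E → ℝ} (hg : ConvexOn ℝ univ g) {lam : ℝ}
    (hlam : 0 < lam) {x y p q : E}
    (hp : IsMinOn (fun u => g u + lam / 2 * ‖u - x‖ ^ 2) univ p)
    (hq : IsMinOn (fun u => g u + lam / 2 * ‖u - y‖ ^ 2) univ q) :
    ‖p - q‖ ^ 2 ≤ ⟪p - q, x - y⟫ := by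
  have hpq := (hg.strongConvexOn_add_mul_norm_sub_sq lam x).add_mul_norm_sub_sq_le_of_isMinOn
    hp (mem_univ p) (mem_univ q)
  have hqp := (hg.strongConvexOn_add_mul_norm_sub_sq lam y).add_mul_norm_sub_sq_le_of_isMinOn
    hq (mem_univ q) (mem_univ p)
  have hpar : ‖q - x‖ ^ 2 + ‖p - y‖ ^ 2 - ‖p - x‖ ^ 2 - ‖q - y‖ ^ 2 = 2 * ⟪p - q, x - y⟫ := by
    simp only [norm_sub_sq_real, inner_sub_left, inner_sub_right]
    ring
  rw [norm_sub_rev q p] at hpq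
  nlinarith

lemma norm_sub_le_of_norm_sq_le_inner {a b : E} (h : ‖a‖ ^ 2 ≤ ⟪a, b⟫) : ‖b - a‖ ≤ ‖b‖ := by
  have : ‖b - a‖ ^ 2 ≤ ‖b‖ ^ 2 := by
    rw [norm_sub_sq_real, real_inner_comm]
    nlinarith [sq_nonneg ‖a‖]
  exact (pow_le_pow_iff_left₀ (norm_nonneg _) (norm_nonneg _) two_ne_zero).1 this

lemma hasGradientAt_of_sub_inner_le [CompleteSpace E] {f : E → ℝ} {G : E → E} {K : ℝ}
    (hf : ∀ y z, f y - f z - ⟪G z, y - z⟫ ≤ K * ‖y - z‖ ^ 2) {x : E} (hG : ContinuousAt G x) :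
    HasGradientAt f (G x) x := by
  rw [hasGradientAt_iff_isLittleO, Asymptotics.isLittleO_iff]
  intro c hc
  have hsmall : Tendsto (fun y => |K| * ‖y - x‖ + ‖G y - G x‖) (𝓝 x) (𝓝 0) := by
    have h1 : Tendsto (fun y => |K| * ‖y - x‖) (𝓝 x) (𝓝 0) := by
      simpa using (((continuous_id.tendsto x).sub_const x).norm.const_mul |K|)
    simpa using h1.add (tendsto_iff_norm_sub_tendsto_zero.1 hG.tendsto)
  filter_upwards [hsmall.eventually (ge_mem_nhds hc)] with y hy
  have hup := hf y x
  have hdown := hf x y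
  have hcs := abs_real_inner_le_norm (G y - G x) (y - x)
  rw [inner_sub_left, abs_le] at hcs
  have hxy : x - y = -(y - x) := (neg_sub y x).symm
  rw [hxy, inner_neg_right, norm_neg] at hdown
  -- the lower bound is `hf x y` corrected by Cauchy–Schwarz for `⟪G y - G x, y - x⟫`
  rw [Real.norm_eq_abs, abs_le]
  constructor <;> nlinarith [le_abs_self K, neg_abs_le K, norm_nonneg (y - x), sq_nonneg ‖y - x‖]

lemma moreauEnvelope_sub_sub_inner_le {g : E → ℝ} {lam : ℝ} {prox : E → E}
    (hprox : ∀ x, IsMinOn (fun u => g u + lam / 2 * ‖u - x‖ ^ 2) univ (prox x)) (y z : E) :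
    moreauEnvelope g lam y - moreauEnvelope g lam z - ⟪lam • (z - prox z), y - z⟫
      ≤ lam / 2 * ‖y - z‖ ^ 2 := by
  have hle : g (prox y) + lam / 2 * ‖prox y - y‖ ^ 2 ≤ g (prox z) + lam / 2 * ‖prox z - y‖ ^ 2 :=
    hprox y (mem_univ (prox z))
  rw [moreauEnvelope_eq_of_isMinOn (hprox y), moreauEnvelope_eq_of_isMinOn (hprox z)]
  have hpy : prox z - y = (prox z - z) - (y - z) := (sub_sub_sub_cancel_right _ _ _).symm
  rw [hpy, norm_sub_sq_real (prox z - z)] at hle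
  rw [real_inner_smul_left, ← neg_sub (prox z) z, inner_neg_left]
  linarith

end InnerProductSpace

/-- **Moreau envelope of a convex function is λ-smooth.**
Let `E` be a finite-dimensional real inner product space, `g : E → ℝ` convex and
continuous, `λ > 0`.  Then the Moreau envelope `g̃^λ` is differentiable and its
gradient is `λ`-Lipschitz: `‖∇g̃^λ(x) − ∇g̃^λ(y)‖ ≤ λ‖x − y‖` for all `x, y`. -/
theorem moreau_envelope_smooth
    {E : Type*} [NormedAddCommGroup E] [InnerProductSpace ℝ E] [FiniteDimensional ℝ E]
    (g : E → ℝ) (hconv : ConvexOn ℝ Set.univ g) (hcont : Continuous g)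
    (lam : ℝ) (hlam : 0 < lam) :
    Differentiable ℝ (fun x : E => ⨅ u : E, (g u + lam / 2 * ‖u - x‖ ^ 2)) ∧
      ∀ x y : E,
        ‖gradient (fun z : E => ⨅ u : E, (g u + lam / 2 * ‖u - z‖ ^ 2)) x
            - gradient (fun z : E => ⨅ u : E, (g u + lam / 2 * ‖u - z‖ ^ 2)) y‖
          ≤ lam * ‖x - y‖ := by
  choose prox hprox using hconv.exists_isMinOn_add_mul_norm_sub_sq hcont hlam
  have hlip : ∀ x y, ‖(x - prox x) - (y - prox y)‖ ≤ ‖x - y‖ := fun x y => by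
    rw [sub_sub_sub_comm]
    exact norm_sub_le_of_norm_sq_le_inner
      (hconv.norm_sub_sq_le_inner_of_isMinOn hlam (hprox x) (hprox y))
  have hres : Continuous fun x => lam • (x - prox x) :=
    (LipschitzWith.mk_one fun x y => by simpa only [dist_eq_norm] using hlip x y).continuous
      |>.const_smul lam
  have hgrad : ∀ x, HasGradientAt (moreauEnvelope g lam) (lam • (x - prox x)) x := fun x =>
    hasGradientAt_of_sub_inner_le (moreauEnvelope_sub_sub_inner_le hprox) hres.continuousAt
  refine ⟨fun x => (hgrad x).differentiableAt, fun x y => ?_⟩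
  change ‖gradient (moreauEnvelope g lam) x - gradient (moreauEnvelope g lam) y‖ ≤ _
  rw [(hgrad x).gradient, (hgrad y).gradient, ← smul_sub, norm_smul, Real.norm_of_nonneg hlam.le]
  exact mul_le_mul_of_nonneg_left (hlip x y) hlam.le
end

section
/- (Client-level convergence, non-convex case.) Let E be a finite-dimensional real inner product space, let f : E → ℝ be differentiable with L_f-Lipschitz gradient (not necessarily convex), let λ > 2L_f ≥ 0, w ∈ E, and 0 < α < 2/(L_f + λ). Define θ⁰ = w and θ^{l+1} = θ^l − α ( ∇f(θ^l) + λ(θ^l − w) ) for l ∈ ℕ. Then for every L ≥ 1 there exists l < L such that ‖θ^l − prox_{f/λ}(w)‖² ≤ ( f(w) − f̃^λ(w) ) / ( L α (1 − α(L_f + λ)/2) (λ − L_f)² ). -/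
/-!
The iteration is gradient descent with step `α` on `F u = f u + λ/2 ‖u - w‖²`, whose gradient
`∇F = ∇f + λ(· - w)` is `(L_f + λ)`-Lipschitz. The descent lemma gives
`F(θˡ⁺¹) + α(1 - α(L_f + λ)/2)‖∇F(θˡ)‖² ≤ F(θˡ)`, so `∑_{l<L} ‖∇F(θˡ)‖²` is at most
`(F(w) - inf F) / (α(1 - α(L_f + λ)/2))`. Since `∇F(p) = 0` and `∇F - λ·id` is `L_f`-Lipschitz,
`‖∇F(x)‖ ≥ (λ - L_f)‖x - p‖`; the smallest of the `L` terms `‖θˡ - p‖²` is at most their mean.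
-/

open Finset RealInnerProductSpace

section NormedSpace

variable {E : Type*} [NormedAddCommGroup E] [NormedSpace ℝ E]

theorem norm_add_smul_sub_sub_le {g : E → E} {K : ℝ} (hg : ∀ x y, ‖g x - g y‖ ≤ K * ‖x - y‖)
    {lam : ℝ} (hlam : 0 ≤ lam) (w x y : E) :
    ‖(g x + lam • (x - w)) - (g y + lam • (y - w))‖ ≤ (K + lam) * ‖x - y‖ := by
  calc ‖(g x + lam • (x - w)) - (g y + lam • (y - w))‖
      = ‖(g x - g y) + lam • (x - y)‖ := by congr 1; module
    _ ≤ ‖g x - g y‖ + ‖lam • (x - y)‖ := norm_add_le _ _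
    _ ≤ (K + lam) * ‖x - y‖ := by
      rw [norm_smul, Real.norm_of_nonneg hlam, add_mul]
      gcongr
      exact hg x y

theorem sub_mul_norm_sub_le_norm_add_smul_sub {g : E → E} {K : ℝ}
    (hg : ∀ x y, ‖g x - g y‖ ≤ K * ‖x - y‖) {lam : ℝ} (hlam : 0 ≤ lam) (w x y : E) :
    (lam - K) * ‖x - y‖ ≤ ‖(g x + lam • (x - w)) - (g y + lam • (y - w))‖ := by
  calc (lam - K) * ‖x - y‖ ≤ ‖lam • (x - y)‖ - ‖g x - g y‖ := by
        rw [norm_smul, Real.norm_of_nonneg hlam, sub_mul]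
        linarith [hg x y]
    _ ≤ ‖(g x - g y) + lam • (x - y)‖ := by
        have h := norm_sub_le (g x - g y + lam • (x - y)) (g x - g y)
        rw [add_sub_cancel_left] at h
        linarith
    _ = ‖(g x + lam • (x - w)) - (g y + lam • (y - w))‖ := by congr 1; module

end NormedSpace

section InnerProductSpace

variable {E : Type*} [NormedAddCommGroup E] [InnerProductSpace ℝ E] [CompleteSpace E]

theorem HasGradientAt.add_half_mul_norm_sub_sq {f : E → ℝ} {f' x : E} (hf : HasGradientAt f f' x)
    (lam : ℝ) (w : E) :
    HasGradientAt (fun u => f u + lam / 2 * ‖u - w‖ ^ 2) (f' + lam • (x - w)) x := by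
  rw [hasGradientAt_iff_hasFDerivAt] at hf ⊢
  refine (hf.add ((((hasFDerivAt_id x).sub_const w).norm_sq).const_mul (lam / 2))).congr_fderiv ?_
  ext u
  simp only [id_eq, map_sub, ContinuousLinearMap.comp_id, add_apply,
    InnerProductSpace.toDual_apply_apply, smul_apply, sub_apply, coe_innerSL_apply, nsmul_eq_mul,
    smul_eq_mul, inner_add_left, real_inner_smul_left, inner_sub_left]
  ring

theorem IsLocalMin.hasGradientAt_eq_zero {F : E → ℝ} {g p : E} (hmin : IsLocalMin F p)
    (hF : HasGradientAt F g p) : g = 0 := by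
  simpa using hmin.hasFDerivAt_eq_zero (hasGradientAt_iff_hasFDerivAt.mp hF)

theorem HasGradientAt.hasDerivAt_comp_add_smul {F : E → ℝ} {g x v : E} {t : ℝ}
    (hF : HasGradientAt F g (x + t • v)) : HasDerivAt (fun s : ℝ => F (x + s • v)) ⟪g, v⟫ t := by
  have hline : HasDerivAt (fun s : ℝ => x + s • v) v t := by
    simpa using ((hasDerivAt_id t).smul_const v).const_add x
  have h := (hasGradientAt_iff_hasFDerivAt.mp hF).comp_hasDerivAt t hline
  rw [InnerProductSpace.toDual_apply_apply] at h
  exact h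

theorem le_add_inner_add_half_mul_norm_sq {F : E → ℝ} {G : E → E} {K : ℝ}
    (hF : ∀ x, HasGradientAt F (G x) x) (hG : ∀ x y, ‖G x - G y‖ ≤ K * ‖x - y‖) (x v : E) :
    F (x + v) ≤ F x + ⟪G x, v⟫ + K / 2 * ‖v‖ ^ 2 := by
  set φ : ℝ → ℝ := fun t => F (x + t • v) - t * ⟪G x, v⟫ - K / 2 * ‖v‖ ^ 2 * t ^ 2
  have hφ : ∀ t, HasDerivAt φ (⟪G (x + t • v) - G x, v⟫ - K * ‖v‖ ^ 2 * t) t := by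
    intro t
    refine (((hF _).hasDerivAt_comp_add_smul.sub ((hasDerivAt_id t).mul_const ⟪G x, v⟫)).sub
      ((hasDerivAt_pow 2 t).const_mul (K / 2 * ‖v‖ ^ 2))).congr_deriv ?_
    rw [inner_sub_left]
    ring
  have hφ_nonpos : ∀ t ∈ interior (Set.Ici (0 : ℝ)),
      ⟪G (x + t • v) - G x, v⟫ - K * ‖v‖ ^ 2 * t ≤ 0 := by
    intro t ht
    rw [interior_Ici, Set.mem_Ioi] at ht
    have hinner : ⟪G (x + t • v) - G x, v⟫ ≤ K * ‖v‖ ^ 2 * t := calc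
      ⟪G (x + t • v) - G x, v⟫
        ≤ ‖G (x + t • v) - G x‖ * ‖v‖ := real_inner_le_norm _ _
      _ ≤ K * ‖x + t • v - x‖ * ‖v‖ := by gcongr; exact hG _ _
      _ = K * ‖v‖ ^ 2 * t := by
        rw [add_sub_cancel_left, norm_smul, Real.norm_of_nonneg ht.le]; ring
    linarith
  have hanti := antitoneOn_of_hasDerivWithinAt_nonpos (convex_Ici 0)
    (HasDerivAt.continuousOn fun t _ => hφ t) (fun t _ => (hφ t).hasDerivWithinAt) hφ_nonpos
  have h01 := hanti Set.self_mem_Ici (Set.mem_Ici.mpr zero_le_one) zero_le_one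
  simp only [φ, one_smul, one_mul, one_pow, mul_one, zero_smul, add_zero, zero_mul, sub_zero,
    ne_eq, OfNat.ofNat_ne_zero, not_false_eq_true, zero_pow, mul_zero] at h01
  linarith

theorem add_mul_norm_sq_le_of_gradient_step {F : E → ℝ} {G : E → E} {K : ℝ}
    (hF : ∀ x, HasGradientAt F (G x) x) (hG : ∀ x y, ‖G x - G y‖ ≤ K * ‖x - y‖) (α : ℝ) (x : E) :
    F (x - α • G x) + α * (1 - α * K / 2) * ‖G x‖ ^ 2 ≤ F x := by
  have h := le_add_inner_add_half_mul_norm_sq hF hG x (-(α • G x))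
  rw [← sub_eq_add_neg, inner_neg_right, real_inner_smul_right, real_inner_self_eq_norm_sq,
    norm_neg, norm_smul, mul_pow, Real.norm_eq_abs, sq_abs] at h
  linarith

theorem mul_sum_norm_sq_le_of_gradient_descent {F : E → ℝ} {G : E → E} {K : ℝ}
    (hF : ∀ x, HasGradientAt F (G x) x) (hG : ∀ x y, ‖G x - G y‖ ≤ K * ‖x - y‖) {α : ℝ}
    {θ : ℕ → E} (hθ : ∀ l, θ (l + 1) = θ l - α • G (θ l)) (N : ℕ) :
    α * (1 - α * K / 2) * ∑ l ∈ range N, ‖G (θ l)‖ ^ 2 ≤ F (θ 0) - F (θ N) := by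
  rw [mul_sum, ← sum_range_sub' (fun l => F (θ l))]
  gcongr with l
  have := add_mul_norm_sq_le_of_gradient_step hF hG α (θ l)
  rw [hθ]
  linarith

theorem sum_norm_sub_sq_le_of_gradient_descent {F : E → ℝ} {G : E → E} {K μ α m : ℝ} {p : E}
    (hF : ∀ x, HasGradientAt F (G x) x) (hG : ∀ x y, ‖G x - G y‖ ≤ K * ‖x - y‖)
    (hm : ∀ x, m ≤ F x) (hμ : 0 < μ) (herr : ∀ x, μ * ‖x - p‖ ≤ ‖G x‖)
    (hα : 0 < α * (1 - α * K / 2)) {θ : ℕ → E} (hθ : ∀ l, θ (l + 1) = θ l - α • G (θ l))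
    (N : ℕ) :
    ∑ l ∈ range N, ‖θ l - p‖ ^ 2 ≤ (F (θ 0) - m) / (α * (1 - α * K / 2) * μ ^ 2) := by
  rw [le_div_iff₀ (by positivity)]
  calc (∑ l ∈ range N, ‖θ l - p‖ ^ 2) * (α * (1 - α * K / 2) * μ ^ 2)
      = α * (1 - α * K / 2) * ∑ l ∈ range N, (μ * ‖θ l - p‖) ^ 2 := by
        rw [sum_mul, mul_sum]
        exact sum_congr rfl fun l _ => by ring
    _ ≤ α * (1 - α * K / 2) * ∑ l ∈ range N, ‖G (θ l)‖ ^ 2 := by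
        gcongr with l
        exact herr _
    _ ≤ F (θ 0) - F (θ N) := mul_sum_norm_sq_le_of_gradient_descent hF hG hθ N
    _ ≤ F (θ 0) - m := by linarith [hm (θ N)]

theorem sub_mul_norm_sub_le_norm_gradient_of_isMinOn {f : E → ℝ} {Lf lam : ℝ}
    (hdiff : Differentiable ℝ f) (hlip : ∀ x y, ‖gradient f x - gradient f y‖ ≤ Lf * ‖x - y‖)
    (hlam : 0 ≤ lam) {w p : E}
    (hp : IsMinOn (fun u => f u + lam / 2 * ‖u - w‖ ^ 2) Set.univ p) (x : E) :
    (lam - Lf) * ‖x - p‖ ≤ ‖gradient f x + lam • (x - w)‖ := by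
  have hp_crit : gradient f p + lam • (p - w) = 0 :=
    (hp.isLocalMin Filter.univ_mem).hasGradientAt_eq_zero
      ((hdiff p).hasGradientAt.add_half_mul_norm_sub_sq lam w)
  simpa [hp_crit] using sub_mul_norm_sub_le_norm_add_smul_sub hlip hlam w x p

end InnerProductSpace

theorem exists_lt_le_div_of_sum_range_le {a : ℕ → ℝ} {S : ℝ} {L : ℕ} (hL : 1 ≤ L)
    (h : ∑ l ∈ range L, a l ≤ S) : ∃ l < L, a l ≤ S / L := by
  have hL' : (0 : ℝ) < L := by exact_mod_cast hL
  obtain ⟨l, hl, hle⟩ := exists_le_of_sum_le (nonempty_range_iff.mpr (by omega))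
    (h.trans_eq (by rw [sum_const, card_range, nsmul_eq_mul, mul_div_cancel₀ _ hL'.ne']) :
      ∑ l ∈ range L, a l ≤ ∑ _l ∈ range L, S / L)
  exact ⟨l, mem_range.mp hl, hle⟩

/-- **Client-level convergence of PerMFL, non-convex case.**
Let `f : E → ℝ` be differentiable with `L_f`-Lipschitz gradient (not necessarily
convex), `λ > 2L_f ≥ 0`, `w ∈ E`, `0 < α < 2/(L_f + λ)`.  With `θ⁰ = w` and
`θ^{l+1} = θˡ − α(∇f(θˡ) + λ(θˡ − w))`, for every `L ≥ 1` there exists `l < L`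
such that `‖θˡ − prox_{f/λ}(w)‖²
≤ (f(w) − f̃^λ(w)) / (Lα(1 − α(L_f + λ)/2)(λ − L_f)²)`. -/
theorem permfl_client_convergence_nonconvex
    {E : Type*} [NormedAddCommGroup E] [InnerProductSpace ℝ E] [FiniteDimensional ℝ E]
    (f : E → ℝ) (Lf lam : ℝ) (hLf : 0 ≤ Lf) (hlam : 2 * Lf < lam)
    (hdiff : Differentiable ℝ f)
    (hlip : ∀ x y : E, ‖gradient f x - gradient f y‖ ≤ Lf * ‖x - y‖)
    (w : E) (α : ℝ) (hα0 : 0 < α) (hα : α < 2 / (Lf + lam))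
    (p : E) (hp : IsMinOn (fun u : E => f u + lam / 2 * ‖u - w‖ ^ 2) Set.univ p)
    (θ : ℕ → E) (hθ0 : θ 0 = w)
    (hrec : ∀ l : ℕ, θ (l + 1) = θ l - α • (gradient f (θ l) + lam • (θ l - w))) :
    ∀ L : ℕ, 1 ≤ L → ∃ l < L,
      ‖θ l - p‖ ^ 2
        ≤ (f w - ⨅ u : E, (f u + lam / 2 * ‖u - w‖ ^ 2))
            / ((L : ℝ) * α * (1 - α * (Lf + lam) / 2) * (lam - Lf) ^ 2) := by
  intro L hL
  have hlam0 : 0 ≤ lam := by linarith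
  have hα' : 0 < α * (1 - α * (Lf + lam) / 2) :=
    mul_pos hα0 (by linarith [(lt_div_iff₀ (by linarith : 0 < Lf + lam)).mp hα])
  have hbdd : BddBelow (Set.range fun u => f u + lam / 2 * ‖u - w‖ ^ 2) :=
    ⟨_, Set.forall_mem_range.2 fun u => hp (Set.mem_univ u)⟩
  have hsum := sum_norm_sub_sq_le_of_gradient_descent
    (fun x => (hdiff x).hasGradientAt.add_half_mul_norm_sub_sq lam w)
    (norm_add_smul_sub_sub_le hlip hlam0 w) (ciInf_le hbdd) (by linarith : 0 < lam - Lf)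
    (sub_mul_norm_sub_le_norm_gradient_of_isMinOn hdiff hlip hlam0 hp) hα' hrec L
  obtain ⟨l, hl, hle⟩ := exists_lt_le_div_of_sum_range_le hL hsum
  refine ⟨l, hl, hle.trans_eq ?_⟩
  rw [hθ0, sub_self, norm_zero, div_div]
  ring
end
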